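/- arXiv:1705.03328 — 4 statements merged into one kernel-verified Lean document; each statement's English description precedes it below -/
import Mathlib

section
/- Let 𝔼 = ⋂_{k∈ℕ} 𝔼_k ⊂ (0,1) be a Cantor-like set, where 𝔼_0 = (0,1) and each 𝔼_k is a finite union of mutually disjoint closed intervals with 𝔼_k ⊂ 𝔼_{k−1}. Suppose there exist constants 0 ≤ δ ≤ 1 and c > 0 such that for every k ≥ 1 and every interval E_{k−1} of level 𝔼_{k−1}: (1) the minimal gap ε_k(E_{k−1}) between distinct level-k intervals inside E_{k−1} satisfies ε_k(E_{k−1}) ≥ c·|E_{k−1}|/m_k(E_{k−1}), where m_k(E_{k−1}) is the number of level-k intervals contained in E_{k−1}; and (2) every level-k interval E_k ⊂ E_{k−1} satisfies |E_k|^δ ≥ |E_{k−1}|^δ / m_k(E_{k−1}). Then the Hausdorff dimension of 𝔼 is at least δ. -/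
/-!
Mass distribution principle. Give `(0, 1)` mass `1` and let every interval split its mass equally
among its children; the counting condition (2) then bounds the mass of an interval `E` by `|E|^δ`.
For an interval `U`, follow the tree down from `(0, 1)` while `U` meets only one child. At the
first interval `E` with at least two children meeting `U`, the gap condition (1) spaces these
children `c|E|/m` apart, so at most `2|U|m/(c|E|)` of them meet `U`, and the mass of the level-`n`
intervals inside `U` is at most `min(1, 2|U|/(c|E|)) |E|^δ ≤ (2|U|/c)^δ`. As the level-`n`
intervals have length at most `(1 - c/2)^n` and the limit set is compact, every cover of it can be
fattened to finitely many open intervals each containing whole level-`N` intervals; summing the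
bound over them gives `μH[δ] > 0`.
-/

open Set MeasureTheory
open scoped Classical

theorem exists_mem_Icc_abs_sub_lt {a b r z : ℝ} (hab : a ≤ b) (hr : 0 < r)
    (hz : z ∈ Ioo (a - r) (b + r)) : ∃ x ∈ Icc a b, |z - x| < r := by
  rcases le_total z a with h | h
  · exact ⟨a, left_mem_Icc.2 hab, abs_sub_lt_iff.2 ⟨by linarith, by linarith [hz.1]⟩⟩
  rcases le_total z b with h' | h'
  · exact ⟨z, ⟨h, h'⟩, by simpa using hr⟩
  · exact ⟨b, right_mem_Icc.2 hab, abs_sub_lt_iff.2 ⟨by linarith [hz.2], by linarith⟩⟩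

theorem sum_sub_add_le_of_separated {ι : Type*} {s : Finset ι} {a b : ι → ℝ} {u v g : ℝ}
    (hg : 0 < g) (huv : u ≤ v) (hab : ∀ i ∈ s, a i ≤ b i)
    (hsub : ∀ i ∈ s, u ≤ a i ∧ b i ≤ v)
    (hsep : ∀ i ∈ s, ∀ j ∈ s, i ≠ j →
      ∀ x ∈ Icc (a i) (b i), ∀ y ∈ Icc (a j) (b j), g ≤ |x - y|) :
    ∑ i ∈ s, (b i - a i + g) ≤ v - u + g := by
  set U : ι → Set ℝ := fun i => Ioo (a i - g / 2) (b i + g / 2)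
  have hdisj : (s : Set ι).PairwiseDisjoint U := by
    intro i hi j hj hij
    refine Set.disjoint_left.2 fun z hzi hzj => ?_
    obtain ⟨x, hx, hxz⟩ := exists_mem_Icc_abs_sub_lt (hab i hi) (half_pos hg) hzi
    obtain ⟨y, hy, hyz⟩ := exists_mem_Icc_abs_sub_lt (hab j hj) (half_pos hg) hzj
    have := hsep i hi j hj hij x hx y hy
    have := abs_sub_le x z y
    rw [abs_sub_comm] at hxz
    linarith
  have hU : ⋃ i ∈ s, U i ⊆ Ioo (u - g / 2) (v + g / 2) := by
    refine iUnion₂_subset fun i hi z hz => ?_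
    obtain ⟨hu, hv⟩ := hsub i hi
    exact ⟨by linarith [hz.1], by linarith [hz.2]⟩
  have hvol := measure_mono (μ := volume) hU
  rw [measure_biUnion_finset hdisj fun i _ => measurableSet_Ioo, Real.volume_Ioo] at hvol
  simp only [U, Real.volume_Ioo] at hvol
  rw [← ENNReal.ofReal_sum_of_nonneg fun i hi => by linarith [hab i hi],
    ENNReal.ofReal_le_ofReal_iff (by linarith)] at hvol
  convert hvol using 1
  · exact Finset.sum_congr rfl fun i _ => by ring
  · ring

theorem Finset.sum_biUnion_le_of_nonneg {ι α : Type*} [DecidableEq α] {s : Finset ι}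
    {t : ι → Finset α} {f : α → ℝ} (hf : ∀ a, 0 ≤ f a) :
    ∑ a ∈ s.biUnion t, f a ≤ ∑ i ∈ s, ∑ a ∈ t i, f a := by
  classical
  induction s using Finset.induction_on with
  | empty => simp
  | insert i s hi ih =>
    rw [biUnion_insert, sum_insert hi]
    have := sum_union_inter (s₁ := t i) (s₂ := s.biUnion t) (f := f)
    linarith [sum_nonneg fun a (_ : a ∈ t i ∩ s.biUnion t) => hf a]

theorem mul_rpow_le_rpow_of_mul_le {x L a δ : ℝ} (hx₀ : 0 ≤ x) (hx₁ : x ≤ 1)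
    (hL : 0 ≤ L) (hxL : x * L ≤ a) (hδ₀ : 0 ≤ δ) (hδ₁ : δ ≤ 1) : x * L ^ δ ≤ a ^ δ :=
  calc x * L ^ δ = x ^ (1 - δ) * (x * L) ^ δ := by
        rw [Real.mul_rpow hx₀ hL, ← mul_assoc, ← Real.rpow_add' hx₀ (by norm_num),
          sub_add_cancel, Real.rpow_one]
    _ ≤ 1 * a ^ δ := by
        gcongr
        exact Real.rpow_le_one hx₀ hx₁ (by linarith)
    _ = a ^ δ := one_mul _

theorem ofReal_rpow_le_iSup_ediam_rpow {t : Set ℝ} (ht : Bornology.IsBounded t) {δ : ℝ}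
    (hδ : 0 < δ) :
    ENNReal.ofReal ((sSup t - sInf t) ^ δ) ≤ ⨆ _ : t.Nonempty, Metric.ediam t ^ δ := by
  rcases t.eq_empty_or_nonempty with rfl | hne
  · simp [Real.zero_rpow hδ.ne']
  · rw [iSup_pos hne, Real.ediam_eq ht, ENNReal.ofReal_rpow_of_nonneg
      (sub_nonneg.2 (Real.sInf_le_sSup _ ht.bddBelow ht.bddAbove)) hδ.le]

theorem exists_finset_le_sum_add_of_le_sum {K : Set ℝ} {δ κ ε : ℝ} (hδ₀ : 0 < δ)
    (hδ₁ : δ ≤ 1) (hK : IsCompact K)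
    (h : ∀ (I : Finset ℕ) (a b : ℕ → ℝ), (∀ i, a i ≤ b i) →
      K ⊆ ⋃ i ∈ I, Ioo (a i) (b i) → κ ≤ ∑ i ∈ I, (b i - a i) ^ δ)
    {t : ℕ → Set ℝ} (ht : ∀ n, Bornology.IsBounded (t n)) (hcov : K ⊆ ⋃ n, t n)
    (hε : 0 < ε) :
    ∃ I : Finset ℕ, κ ≤ ∑ i ∈ I, (sSup (t i) - sInf (t i)) ^ δ + ε := by
  have hw (n : ℕ) : 0 ≤ sSup (t n) - sInf (t n) :=
    sub_nonneg.2 (Real.sInf_le_sSup _ (ht n).bddBelow (ht n).bddAbove)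
  -- enlarge `t n` to an open interval, adding `ε / 2 ^ (n + 1)` to its `δ`-weight
  set η : ℕ → ℝ := fun n => (ε / 2 / 2 ^ n) ^ δ⁻¹
  have hε' (n : ℕ) : 0 < ε / 2 / 2 ^ n := by positivity
  have hη (n : ℕ) : η n ^ δ = ε / 2 / 2 ^ n := Real.rpow_inv_rpow (hε' n).le hδ₀.ne'
  have hη₀ (n : ℕ) : 0 < η n := Real.rpow_pos_of_pos (hε' n) _
  have htI (n : ℕ) : t n ⊆ Ioo (sInf (t n) - η n / 2) (sSup (t n) + η n / 2) := fun x hx =>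
    ⟨by linarith [csInf_le (ht n).bddBelow hx, hη₀ n],
      by linarith [le_csSup (ht n).bddAbove hx, hη₀ n]⟩
  obtain ⟨I, hI⟩ :=
    hK.elim_finite_subcover _ (fun _ => isOpen_Ioo) (hcov.trans (iUnion_mono htI))
  refine ⟨I, (h I _ _ (fun n => by linarith [hw n, hη₀ n]) hI).trans ?_⟩
  calc _ ≤ ∑ i ∈ I, ((sSup (t i) - sInf (t i)) ^ δ + ε / 2 / 2 ^ i) := by
        refine Finset.sum_le_sum fun i _ => ?_
        rw [← hη i, show sSup (t i) + η i / 2 - (sInf (t i) - η i / 2) =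
          sSup (t i) - sInf (t i) + η i by ring]
        exact Real.rpow_add_le_add_rpow (hw i) (hη₀ i).le hδ₀.le hδ₁
    _ ≤ _ := by
        rw [Finset.sum_add_distrib]
        grw [Summable.sum_le_tsum I (fun i _ => (hε' i).le) (summable_geometric_two' ε),
          tsum_geometric_two']

theorem ofReal_le_hausdorffMeasure_of_le_sum {K : Set ℝ} {δ κ : ℝ} (hδ₀ : 0 < δ)
    (hδ₁ : δ ≤ 1) (hK : IsCompact K)
    (h : ∀ (I : Finset ℕ) (a b : ℕ → ℝ), (∀ i, a i ≤ b i) →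
      K ⊆ ⋃ i ∈ I, Ioo (a i) (b i) → κ ≤ ∑ i ∈ I, (b i - a i) ^ δ) :
    ENNReal.ofReal κ ≤ μH[δ] K := by
  rw [Measure.hausdorffMeasure_apply]
  refine le_iSup₂_of_le 1 one_pos (le_iInf₂ fun t hcov => le_iInf fun hdiam => ?_)
  have ht (n : ℕ) : Bornology.IsBounded (t n) :=
    Metric.isBounded_iff_ediam_ne_top.2 ((hdiam n).trans_lt ENNReal.one_lt_top).ne
  refine ENNReal.le_of_forall_pos_le_add fun ε hε _ => ?_
  obtain ⟨I, hI⟩ := exists_finset_le_sum_add_of_le_sum hδ₀ hδ₁ hK h ht hcov (ε := ε) hε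
  have hnn (i : ℕ) : 0 ≤ (sSup (t i) - sInf (t i)) ^ δ :=
    Real.rpow_nonneg (sub_nonneg.2 (Real.sInf_le_sSup _ (ht i).bddBelow (ht i).bddAbove)) δ
  calc ENNReal.ofReal κ ≤ ENNReal.ofReal (∑ i ∈ I, (sSup (t i) - sInf (t i)) ^ δ + ε) :=
        ENNReal.ofReal_le_ofReal hI
    _ = ∑ i ∈ I, ENNReal.ofReal ((sSup (t i) - sInf (t i)) ^ δ) + ε := by
        rw [ENNReal.ofReal_add (Finset.sum_nonneg fun i _ => hnn i) ε.coe_nonneg,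
          ENNReal.ofReal_sum_of_nonneg fun i _ => hnn i, ENNReal.ofReal_coe_nnreal]
    _ ≤ ∑' n, (⨆ _ : (t n).Nonempty, Metric.ediam (t n) ^ δ) + ε := by
        gcongr
        exact (Finset.sum_le_sum fun i _ => ofReal_rpow_le_iSup_ediam_rpow (ht i) hδ₀).trans
          (ENNReal.sum_le_tsum I)

noncomputable def descendants (F : ℕ → Finset (ℝ × ℝ)) (n : ℕ) (q : ℝ × ℝ) :
    Finset (ℝ × ℝ) :=
  (F n).filter fun p => Icc p.1 p.2 ⊆ Icc q.1 q.2

theorem mem_descendants {F : ℕ → Finset (ℝ × ℝ)} {n : ℕ} {p q : ℝ × ℝ} :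
    p ∈ descendants F n q ↔ p ∈ F n ∧ Icc p.1 p.2 ⊆ Icc q.1 q.2 := by
  simp [descendants]

/-- `F k` lists the level-`k` intervals `[p.1, p.2]`; `F 0 = {(0, 1)}` stands for
`𝔼₀ = (0, 1)`. -/
structure IsIntervalTree (F : ℕ → Finset (ℝ × ℝ)) : Prop where
  level_zero : F 0 = {(0, 1)}
  fst_lt_snd : ∀ k, ∀ p ∈ F k, p.1 < p.2
  disjoint : ∀ k, 1 ≤ k → ∀ p ∈ F k, ∀ q ∈ F k, p ≠ q →
    Disjoint (Icc p.1 p.2) (Icc q.1 q.2)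
  level_one_subset : ∀ p ∈ F 1, Icc p.1 p.2 ⊆ Ioo 0 1
  nested : ∀ k, 1 ≤ k → ∀ p ∈ F (k + 1), ∃ q ∈ F k, Icc p.1 p.2 ⊆ Icc q.1 q.2
  two_le_card_children : ∀ k, ∀ q ∈ F k, 2 ≤ (descendants F (k + 1) q).card

def levelSet (F : ℕ → Finset (ℝ × ℝ)) (k : ℕ) : Set ℝ := ⋃ p ∈ F k, Icc p.1 p.2

def limitSet (F : ℕ → Finset (ℝ × ℝ)) : Set ℝ := ⋂ k, levelSet F (k + 1)

theorem isClosed_levelSet (F : ℕ → Finset (ℝ × ℝ)) (k : ℕ) : IsClosed (levelSet F k) :=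
  (F k).finite_toSet.isClosed_biUnion fun _ _ => isClosed_Icc

/-- Each interval passes its mass in equal parts to its children; the sum is over the unique
parent of `p`. -/
noncomputable def mass (F : ℕ → Finset (ℝ × ℝ)) : ℕ → ℝ × ℝ → ℝ
  | 0, _ => 1
  | k + 1, p => ∑ q ∈ F k with Icc p.1 p.2 ⊆ Icc q.1 q.2,
      mass F k q / (descendants F (k + 1) q).card

theorem mass_nonneg (F : ℕ → Finset (ℝ × ℝ)) : ∀ k p, 0 ≤ mass F k p
  | 0, _ => zero_le_one
  | k + 1, _ => Finset.sum_nonneg fun q _ => div_nonneg (mass_nonneg F k q) (Nat.cast_nonneg _)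

namespace IsIntervalTree

variable {F : ℕ → Finset (ℝ × ℝ)} (hF : IsIntervalTree F)
include hF

theorem mem_level_zero {q : ℝ × ℝ} : q ∈ F 0 ↔ q = (0, 1) := by
  rw [hF.level_zero, Finset.mem_singleton]

theorem eq_of_subset_of_subset {n k : ℕ} {p q q' : ℝ × ℝ} (hp : p ∈ F n) (hq : q ∈ F k)
    (hq' : q' ∈ F k) (h : Icc p.1 p.2 ⊆ Icc q.1 q.2) (h' : Icc p.1 p.2 ⊆ Icc q'.1 q'.2) :
    q = q' := by
  rcases Nat.eq_zero_or_pos k with rfl | hk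
  · rw [hF.mem_level_zero.1 hq, hF.mem_level_zero.1 hq']
  by_contra hne
  have hx := left_mem_Icc.2 (hF.fst_lt_snd n p hp).le
  exact Set.disjoint_left.1 (hF.disjoint k hk q hq q' hq' hne) (h hx) (h' hx)

theorem exists_parent {k : ℕ} {p : ℝ × ℝ} (hp : p ∈ F (k + 1)) :
    ∃ q ∈ F k, Icc p.1 p.2 ⊆ Icc q.1 q.2 := by
  rcases Nat.eq_zero_or_pos k with rfl | hk
  · exact ⟨(0, 1), hF.mem_level_zero.2 rfl,
      (hF.level_one_subset p hp).trans Ioo_subset_Icc_self⟩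
  · exact hF.nested k hk p hp

theorem exists_ancestor {j n : ℕ} (hjn : j ≤ n) {p : ℝ × ℝ} (hp : p ∈ F n) :
    ∃ a ∈ F j, Icc p.1 p.2 ⊆ Icc a.1 a.2 := by
  induction n, hjn using Nat.le_induction generalizing p with
  | base => exact ⟨p, hp, subset_rfl⟩
  | succ n _ ih =>
    obtain ⟨q, hq, hpq⟩ := hF.exists_parent hp
    obtain ⟨a, ha, hqa⟩ := ih hq
    exact ⟨a, ha, hpq.trans hqa⟩

theorem exists_descendant {j n : ℕ} (hjn : j ≤ n) {q : ℝ × ℝ} (hq : q ∈ F j) :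
    ∃ p ∈ F n, Icc p.1 p.2 ⊆ Icc q.1 q.2 := by
  induction n, hjn using Nat.le_induction with
  | base => exact ⟨q, hq, subset_rfl⟩
  | succ n _ ih =>
    obtain ⟨r, hr, hrq⟩ := ih
    obtain ⟨p, hp⟩ := Finset.card_pos.1 (by linarith [hF.two_le_card_children n r hr])
    exact ⟨p, (mem_descendants.1 hp).1, (mem_descendants.1 hp).2.trans hrq⟩

theorem descendants_zero_one (n : ℕ) : descendants F n (0, 1) = F n := by
  refine Finset.filter_true_of_mem fun p hp => ?_
  obtain ⟨a, ha, hpa⟩ := hF.exists_ancestor (Nat.zero_le n) hp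
  rwa [hF.mem_level_zero.1 ha] at hpa

theorem descendants_self {n : ℕ} {q : ℝ × ℝ} (hq : q ∈ F n) : descendants F n q = {q} :=
  Finset.eq_singleton_iff_unique_mem.2 ⟨mem_descendants.2 ⟨hq, subset_rfl⟩, fun _ hp =>
    hF.eq_of_subset_of_subset (mem_descendants.1 hp).1 (mem_descendants.1 hp).1 hq subset_rfl
      (mem_descendants.1 hp).2⟩

theorem descendants_eq_biUnion {k n : ℕ} (hkn : k < n) {q : ℝ × ℝ} (hq : q ∈ F k) :
    descendants F n q = (descendants F (k + 1) q).biUnion (descendants F n) := by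
  ext p
  simp only [Finset.mem_biUnion, mem_descendants]
  constructor
  · rintro ⟨hp, hpq⟩
    obtain ⟨r, hr, hpr⟩ := hF.exists_ancestor hkn hp
    obtain ⟨q', hq', hrq'⟩ := hF.exists_parent hr
    obtain rfl := hF.eq_of_subset_of_subset hp hq' hq (hpr.trans hrq') hpq
    exact ⟨r, ⟨hr, hrq'⟩, hp, hpr⟩
  · rintro ⟨r, ⟨-, hrq⟩, hp, hpr⟩
    exact ⟨hp, hpr.trans hrq⟩

theorem pairwiseDisjoint_descendants (k n : ℕ) :
    (F k : Set (ℝ × ℝ)).PairwiseDisjoint (descendants F n) := fun _ hq _ hq' hne =>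
  Finset.disjoint_left.2 fun _ hp hp' => hne <|
    hF.eq_of_subset_of_subset (mem_descendants.1 hp).1 hq hq' (mem_descendants.1 hp).2
      (mem_descendants.1 hp').2

theorem mass_of_mem_descendants {k : ℕ} {p q : ℝ × ℝ} (hq : q ∈ F k)
    (hp : p ∈ descendants F (k + 1) q) :
    mass F (k + 1) p = mass F k q / (descendants F (k + 1) q).card := by
  obtain ⟨hp, hpq⟩ := mem_descendants.1 hp
  have : (F k).filter (fun q => Icc p.1 p.2 ⊆ Icc q.1 q.2) = {q} :=
    Finset.eq_singleton_iff_unique_mem.2 ⟨Finset.mem_filter.2 ⟨hq, hpq⟩, fun q' hq' =>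
      hF.eq_of_subset_of_subset hp (Finset.mem_filter.1 hq').1 hq
        (Finset.mem_filter.1 hq').2 hpq⟩
  rw [mass, this, Finset.sum_singleton]

theorem sum_mass_descendants {k n : ℕ} (hkn : k ≤ n) {q : ℝ × ℝ} (hq : q ∈ F k) :
    ∑ p ∈ descendants F n q, mass F n p = mass F k q := by
  induction hkn using Nat.decreasingInduction generalizing q with
  | self => rw [hF.descendants_self hq, Finset.sum_singleton]
  | of_succ k hkn ih =>
    have hm : ((descendants F (k + 1) q).card : ℝ) ≠ 0 := by
      have := hF.two_le_card_children k q hq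
      positivity
    rw [hF.descendants_eq_biUnion hkn hq, Finset.sum_biUnion
      ((hF.pairwiseDisjoint_descendants (k + 1) n).subset fun r hr => (mem_descendants.1 hr).1)]
    rw [Finset.sum_congr rfl fun r hr => (ih (mem_descendants.1 hr).1).trans
      (hF.mass_of_mem_descendants hq hr), Finset.sum_const, nsmul_eq_mul, mul_div_cancel₀ _ hm]

theorem sum_mass (n : ℕ) : ∑ p ∈ F n, mass F n p = 1 := by
  rw [← hF.descendants_zero_one,
    hF.sum_mass_descendants (Nat.zero_le n) (hF.mem_level_zero.2 rfl)]
  rfl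

theorem sum_mass_inside_eq_sum_children {k n : ℕ} (hkn : k < n) {q : ℝ × ℝ} (hq : q ∈ F k)
    (u : ℝ × ℝ) :
    ∑ p ∈ descendants F n q with Icc p.1 p.2 ⊆ Icc u.1 u.2, mass F n p =
      ∑ r ∈ descendants F (k + 1) q with (Icc r.1 r.2 ∩ Icc u.1 u.2).Nonempty,
        ∑ p ∈ descendants F n r with Icc p.1 p.2 ⊆ Icc u.1 u.2, mass F n p := by
  rw [hF.descendants_eq_biUnion hkn hq, Finset.filter_biUnion, Finset.sum_biUnion
    (((hF.pairwiseDisjoint_descendants (k + 1) n).subset fun r hr =>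
      (mem_descendants.1 hr).1).mono fun r => Finset.filter_subset _ _)]
  refine (Finset.sum_filter_of_ne fun r _ hne => ?_).symm
  obtain ⟨p, hp⟩ := Finset.nonempty_of_sum_ne_zero hne
  obtain ⟨hp, hpu⟩ := Finset.mem_filter.1 hp
  have hx := left_mem_Icc.2 (hF.fst_lt_snd n p (mem_descendants.1 hp).1).le
  exact ⟨p.1, (mem_descendants.1 hp).2 hx, hpu hx⟩

theorem levelSet_subset {j k : ℕ} (hjk : j ≤ k) : levelSet F k ⊆ levelSet F j := by
  refine iUnion₂_subset fun p hp => ?_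
  obtain ⟨a, ha, hpa⟩ := hF.exists_ancestor hjk hp
  exact hpa.trans (subset_biUnion_of_mem (u := fun a : ℝ × ℝ => Icc a.1 a.2) ha)

theorem limitSet_subset_Ioo : limitSet F ⊆ Ioo 0 1 :=
  (iInter_subset _ 0).trans (iUnion₂_subset hF.level_one_subset)

theorem isCompact_limitSet : IsCompact (limitSet F) :=
  isCompact_Icc.of_isClosed_subset (isClosed_iInter fun k => isClosed_levelSet F (k + 1))
    (hF.limitSet_subset_Ioo.trans Ioo_subset_Icc_self)

theorem exists_mem_limitSet {n : ℕ} {p : ℝ × ℝ} (hp : p ∈ F n) :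
    ∃ x ∈ Icc p.1 p.2, x ∈ limitSet F := by
  obtain ⟨x, hx⟩ := IsCompact.nonempty_iInter_of_sequence_nonempty_isCompact_isClosed
    (fun k => Icc p.1 p.2 ∩ levelSet F (n + k + 1))
    (fun k => inter_subset_inter_right _ (hF.levelSet_subset (by omega)))
    (fun k => by
      obtain ⟨r, hr, hrp⟩ := hF.exists_descendant (Nat.le_add_right n (k + 1)) hp
      have hx := left_mem_Icc.2 (hF.fst_lt_snd _ r hr).le
      exact ⟨r.1, hrp hx, mem_biUnion hr hx⟩)
    (isCompact_Icc.inter_right (isClosed_levelSet F _))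
    (fun k => isClosed_Icc.inter (isClosed_levelSet F _))
  refine ⟨x, (mem_iInter.1 hx 0).1, mem_iInter.2 fun k => ?_⟩
  exact hF.levelSet_subset (by omega) (mem_iInter.1 hx k).2

end IsIntervalTree

structure IsCantorScheme (F : ℕ → Finset (ℝ × ℝ)) (δ c : ℝ) : Prop
    extends IsIntervalTree F where
  c_pos : 0 < c
  gap : ∀ k, ∀ q ∈ F k, ∀ p ∈ F (k + 1), ∀ p' ∈ F (k + 1), p ≠ p' →
    Icc p.1 p.2 ⊆ Icc q.1 q.2 → Icc p'.1 p'.2 ⊆ Icc q.1 q.2 →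
    ∀ x ∈ Icc p.1 p.2, ∀ y ∈ Icc p'.1 p'.2,
      c * (q.2 - q.1) / ((descendants F (k + 1) q).card : ℝ) ≤ |x - y|
  counting : ∀ k, ∀ q ∈ F k, ∀ p ∈ F (k + 1), Icc p.1 p.2 ⊆ Icc q.1 q.2 →
    (q.2 - q.1) ^ δ / ((descendants F (k + 1) q).card : ℝ) ≤ (p.2 - p.1) ^ δ

namespace IsCantorScheme

variable {F : ℕ → Finset (ℝ × ℝ)} {δ c : ℝ} (hS : IsCantorScheme F δ c)
include hS

theorem card_mul_le_of_forall_meets {k : ℕ} {q u : ℝ × ℝ} (hq : q ∈ F k) (hu : u.1 ≤ u.2)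
    {B : Finset (ℝ × ℝ)} (hB : ∀ r ∈ B, r ∈ descendants F (k + 1) q ∧
      (Icc r.1 r.2 ∩ Icc u.1 u.2).Nonempty) :
    B.card * (c * (q.2 - q.1) / (descendants F (k + 1) q).card) ≤
      u.2 - u.1 + c * (q.2 - q.1) / (descendants F (k + 1) q).card := by
  have hm : (2 : ℝ) ≤ (descendants F (k + 1) q).card := by
    exact_mod_cast hS.two_le_card_children k q hq
  have hL := sub_pos.2 (hS.fst_lt_snd k q hq)
  have hc := hS.c_pos
  choose! x hx using fun r hr => (hB r hr).2
  have := sum_sub_add_le_of_separated (s := B) (a := x) (b := x)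
    (g := c * (q.2 - q.1) / (descendants F (k + 1) q).card) (by positivity) hu
    (fun r _ => le_rfl) (fun r hr => ⟨(hx r hr).2.1, (hx r hr).2.2⟩)
    fun r hr r' hr' hne y hy y' hy' => by
      obtain ⟨hrF, hrq⟩ := mem_descendants.1 (hB r hr).1
      obtain ⟨hrF', hrq'⟩ := mem_descendants.1 (hB r' hr').1
      rw [Icc_self, mem_singleton_iff] at hy hy'
      subst hy hy'
      exact hS.gap k q hq r hrF r' hrF' hne hrq hrq' _ (hx r hr).1 _ (hx r' hr').1
  simpa only [sub_self, zero_add, Finset.sum_const, nsmul_eq_mul] using this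

theorem length_le_of_mem_descendants {k : ℕ} {p q : ℝ × ℝ} (hq : q ∈ F k)
    (hp : p ∈ descendants F (k + 1) q) : p.2 - p.1 ≤ (1 - c / 2) * (q.2 - q.1) := by
  set s := descendants F (k + 1) q
  have hm : (2 : ℝ) ≤ s.card := by exact_mod_cast hS.two_le_card_children k q hq
  have hL := sub_pos.2 (hS.fst_lt_snd k q hq)
  have hc := hS.c_pos
  set g := c * (q.2 - q.1) / s.card
  have hg : 0 < g := by positivity
  have hmg : s.card * g = c * (q.2 - q.1) := mul_div_cancel₀ _ (by positivity)
  have hlen (r) (hr : r ∈ s) : r.1 ≤ r.2 := (hS.fst_lt_snd _ r (mem_descendants.1 hr).1).le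
  have hsum := sum_sub_add_le_of_separated (s := s) (a := Prod.fst) (b := Prod.snd) (u := q.1)
    (v := q.2) hg (by linarith) hlen
    (fun r hr => (Icc_subset_Icc_iff (hlen r hr)).1 (mem_descendants.1 hr).2)
    fun r hr r' hr' hne => hS.gap k q hq r (mem_descendants.1 hr).1 r'
      (mem_descendants.1 hr').1 hne (mem_descendants.1 hr).2 (mem_descendants.1 hr').2
  -- the children, each followed by a gap of `g`, fit into `q` followed by one gap
  rw [Finset.sum_add_distrib, Finset.sum_const, nsmul_eq_mul] at hsum
  have hp_le : p.2 - p.1 ≤ ∑ r ∈ s, (r.2 - r.1) :=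
    Finset.single_le_sum (fun r hr => sub_nonneg.2 (hlen r hr)) hp
  nlinarith

theorem c_lt_two : c < 2 := by
  have h₀ := hS.mem_level_zero.2 rfl
  obtain ⟨p, hp⟩ := Finset.card_pos.1 (by linarith [hS.two_le_card_children 0 _ h₀])
  have := hS.length_le_of_mem_descendants h₀ hp
  have := hS.fst_lt_snd 1 p (mem_descendants.1 hp).1
  norm_num at *
  linarith

theorem length_le_pow {n : ℕ} {p : ℝ × ℝ} (hp : p ∈ F n) :
    p.2 - p.1 ≤ (1 - c / 2) ^ n := by
  induction n generalizing p with
  | zero => simp [hS.mem_level_zero.1 hp]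
  | succ n ih =>
    obtain ⟨q, hq, hpq⟩ := hS.exists_parent hp
    rw [pow_succ']
    exact (hS.length_le_of_mem_descendants hq (mem_descendants.2 ⟨hp, hpq⟩)).trans
      (mul_le_mul_of_nonneg_left (ih hq) (by linarith [hS.c_lt_two]))

theorem mass_le {n : ℕ} {p : ℝ × ℝ} (hp : p ∈ F n) : mass F n p ≤ (p.2 - p.1) ^ δ := by
  induction n generalizing p with
  | zero => simp [hS.mem_level_zero.1 hp, mass]
  | succ n ih =>
    obtain ⟨q, hq, hpq⟩ := hS.exists_parent hp
    rw [hS.mass_of_mem_descendants hq (mem_descendants.2 ⟨hp, hpq⟩)]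
    exact (div_le_div_of_nonneg_right (ih hq) (Nat.cast_nonneg _)).trans
      (hS.counting n q hq p hp hpq)

theorem sum_mass_inside_le_of_two_le_card (hδ₀ : 0 ≤ δ) (hδ₁ : δ ≤ 1) {u : ℝ × ℝ}
    (hu : u.1 ≤ u.2) {k n : ℕ} (hkn : k < n) {q : ℝ × ℝ} (hq : q ∈ F k)
    (h₂ : 2 ≤ ((descendants F (k + 1) q).filter
      fun r => (Icc r.1 r.2 ∩ Icc u.1 u.2).Nonempty).card) :
    ∑ r ∈ descendants F (k + 1) q with (Icc r.1 r.2 ∩ Icc u.1 u.2).Nonempty,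
      ∑ p ∈ descendants F n r with Icc p.1 p.2 ⊆ Icc u.1 u.2, mass F n p ≤
        (2 * (u.2 - u.1) / c) ^ δ := by
  set B := (descendants F (k + 1) q).filter fun r => (Icc r.1 r.2 ∩ Icc u.1 u.2).Nonempty
  set m : ℝ := ((descendants F (k + 1) q).card : ℝ)
  have hc := hS.c_pos
  have hL := sub_pos.2 (hS.fst_lt_snd k q hq)
  have hm : 0 < m := by have := hS.two_le_card_children k q hq; positivity
  have hBm : (B.card : ℝ) ≤ m := by
    simp only [B, m]
    exact_mod_cast Finset.card_le_card (Finset.filter_subset _ _)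
  have hterm (r) (hr : r ∈ B) :
      ∑ p ∈ descendants F n r with Icc p.1 p.2 ⊆ Icc u.1 u.2, mass F n p ≤
        mass F k q / m := by
    have hrq := (Finset.mem_filter.1 hr).1
    refine (Finset.sum_le_sum_of_subset_of_nonneg (Finset.filter_subset _ _)
      fun p _ _ => mass_nonneg F n p).trans_eq ?_
    rw [hS.sum_mass_descendants hkn (mem_descendants.1 hrq).1, hS.mass_of_mem_descendants hq hrq]
  -- the children meeting `[u.1, u.2]` are `c |q| / m`-separated there, and there are at least two
  have hsep : B.card * (c * (q.2 - q.1) / m) ≤ 2 * (u.2 - u.1) := by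
    have := hS.card_mul_le_of_forall_meets hq hu fun r hr => Finset.mem_filter.1 hr
    have := mul_le_mul_of_nonneg_right (show (2 : ℝ) ≤ B.card by exact_mod_cast h₂)
      (show 0 ≤ c * (q.2 - q.1) / m by positivity)
    linarith
  calc _ ≤ ∑ r ∈ B, mass F k q / m := Finset.sum_le_sum hterm
    _ = B.card / m * mass F k q := by rw [Finset.sum_const, nsmul_eq_mul]; ring
    _ ≤ B.card / m * (q.2 - q.1) ^ δ := by gcongr; exact hS.mass_le hq
    _ ≤ (2 * (u.2 - u.1) / c) ^ δ := by
      refine mul_rpow_le_rpow_of_mul_le (by positivity) ((div_le_one hm).2 hBm) hL.le ?_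
        hδ₀ hδ₁
      rw [le_div_iff₀ hc]
      calc _ = B.card * (c * (q.2 - q.1) / m) := by ring
        _ ≤ _ := hsep

theorem sum_mass_inside_le (hδ₀ : 0 ≤ δ) (hδ₁ : δ ≤ 1) {u : ℝ × ℝ} (hu : u.1 ≤ u.2)
    {k n : ℕ} (hkn : k ≤ n) {q : ℝ × ℝ} (hq : q ∈ F k) :
    ∑ p ∈ descendants F n q with Icc p.1 p.2 ⊆ Icc u.1 u.2, mass F n p ≤
      (2 * (u.2 - u.1) / c) ^ δ := by
  have hc := hS.c_pos
  have hbound : 0 ≤ (2 * (u.2 - u.1) / c) ^ δ := by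
    have := sub_nonneg.2 hu
    positivity
  induction hkn using Nat.decreasingInduction generalizing q with
  | self =>
    rw [hS.descendants_self hq, Finset.filter_singleton]
    split_ifs with hqu
    · obtain ⟨h₁, h₂⟩ := (Icc_subset_Icc_iff (hS.fst_lt_snd n q hq).le).1 hqu
      rw [Finset.sum_singleton]
      refine (hS.mass_le hq).trans
        (Real.rpow_le_rpow (by linarith [hS.fst_lt_snd n q hq]) ?_ hδ₀)
      rw [le_div_iff₀ hc]
      nlinarith [hS.c_lt_two]
    · exact hbound
  | of_succ k hkn ih =>
    rw [hS.sum_mass_inside_eq_sum_children hkn hq u]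
    set B := (descendants F (k + 1) q).filter fun r => (Icc r.1 r.2 ∩ Icc u.1 u.2).Nonempty
    rcases le_or_gt B.card 1 with hB | hB
    · rcases B.eq_empty_or_nonempty with hB₀ | ⟨r, hr⟩
      · rw [hB₀, Finset.sum_empty]
        exact hbound
      · rw [Finset.eq_singleton_iff_unique_mem.2
          ⟨hr, fun r' hr' => Finset.card_le_one.1 hB r' hr' r hr⟩, Finset.sum_singleton]
        exact ih (mem_descendants.1 (Finset.mem_filter.1 hr).1).1
    · exact hS.sum_mass_inside_le_of_two_le_card hδ₀ hδ₁ hu hkn hq hB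

theorem sum_mass_descendants_le (hδ₀ : 0 ≤ δ) (hδ₁ : δ ≤ 1) {u : ℝ × ℝ}
    (hu : u.1 ≤ u.2) (n : ℕ) : ∑ p ∈ descendants F n u, mass F n p ≤ (2 * (u.2 - u.1) / c) ^ δ := by
  have := hS.sum_mass_inside_le hδ₀ hδ₁ hu (Nat.zero_le n) (hS.mem_level_zero.2 rfl)
  rwa [hS.descendants_zero_one] at this

theorem le_sum_of_subset_iUnion_Ioo (hδ₀ : 0 ≤ δ) (hδ₁ : δ ≤ 1) (I : Finset ℕ)
    (a b : ℕ → ℝ) (hab : ∀ i, a i ≤ b i) (hcov : limitSet F ⊆ ⋃ i ∈ I, Ioo (a i) (b i)) :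
    (c / 2) ^ δ ≤ ∑ i ∈ I, (b i - a i) ^ δ := by
  have hc := hS.c_pos
  obtain ⟨ρ, hρ, hball⟩ := lebesgue_number_lemma_of_metric (c := fun i : I => Ioo (a i) (b i))
    hS.isCompact_limitSet (fun _ => isOpen_Ioo) fun x hx => by simpa using hcov hx
  obtain ⟨N, hN⟩ := exists_pow_lt_of_lt_one hρ (show 1 - c / 2 < 1 by linarith)
  -- each level-`N` interval meets the limit set and is shorter than the Lebesgue number `ρ`
  have hsub : F N ⊆ I.biUnion fun i => descendants F N (a i, b i) := by
    intro p hp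
    obtain ⟨x, hxp, hx⟩ := hS.exists_mem_limitSet hp
    obtain ⟨⟨i, hi⟩, hρi⟩ := hball x hx
    refine Finset.mem_biUnion.2 ⟨i, hi, mem_descendants.2 ⟨hp, fun y hy => ?_⟩⟩
    refine Ioo_subset_Icc_self (hρi ?_)
    rw [Metric.mem_ball, Real.dist_eq]
    refine lt_of_le_of_lt ?_ ((hS.length_le_pow hp).trans_lt hN)
    exact abs_sub_le_iff.2 ⟨by linarith [hy.2, hxp.1], by linarith [hy.1, hxp.2]⟩
  have hsum : 1 ≤ ∑ i ∈ I, (2 * (b i - a i) / c) ^ δ :=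
    calc 1 = ∑ p ∈ F N, mass F N p := (hS.sum_mass N).symm
      _ ≤ ∑ p ∈ I.biUnion fun i => descendants F N (a i, b i), mass F N p :=
        Finset.sum_le_sum_of_subset_of_nonneg hsub fun p _ _ => mass_nonneg F N p
      _ ≤ ∑ i ∈ I, ∑ p ∈ descendants F N (a i, b i), mass F N p :=
        Finset.sum_biUnion_le_of_nonneg (mass_nonneg F N)
      _ ≤ _ := Finset.sum_le_sum fun i _ => hS.sum_mass_descendants_le hδ₀ hδ₁ (hab i) N
  have hscale (i : ℕ) : (2 * (b i - a i) / c) ^ δ = (b i - a i) ^ δ / (c / 2) ^ δ := by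
    rw [← Real.div_rpow (sub_nonneg.2 (hab i)) (by positivity)]
    ring_nf
  rwa [Finset.sum_congr rfl fun i _ => hscale i, ← Finset.sum_div,
    one_le_div (by positivity)] at hsum

theorem ofReal_le_dimH_limitSet (hδ₀ : 0 ≤ δ) (hδ₁ : δ ≤ 1) :
    ENNReal.ofReal δ ≤ dimH (limitSet F) := by
  rcases hδ₀.eq_or_lt with rfl | hδ₀
  · simp
  have hμ : ENNReal.ofReal ((c / 2) ^ δ) ≤ μH[δ] (limitSet F) :=
    ofReal_le_hausdorffMeasure_of_le_sum hδ₀ hδ₁ hS.isCompact_limitSet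
      (hS.le_sum_of_subset_iUnion_Ioo hδ₀.le hδ₁)
  have hpos : 0 < (c / 2) ^ δ := by have := hS.c_pos; positivity
  refine le_dimH_of_hausdorffMeasure_ne_zero (d := δ.toNNReal) ?_
  rw [Real.coe_toNNReal _ hδ₀.le]
  exact ((ENNReal.ofReal_pos.2 hpos).trans_le hμ).ne'

end IsCantorScheme

open scoped Classical in
/-- Falconer-type dimension bound for a Cantor-like set in `(0,1)`.
`F k` is the finite family of (endpoints of) the disjoint closed intervals of level `k`,
with `F 0 = {(0,1)}` playing the role of `𝔼₀ = (0,1)`.  Assuming the gap condition (1)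
and the counting condition (2), the Hausdorff dimension of the intersection is `≥ δ`. -/
theorem stmt8 (F : ℕ → Finset (ℝ × ℝ)) (δ c : ℝ)
    (hδ : δ ∈ Set.Icc (0 : ℝ) 1) (hc : 0 < c)
    (hF0 : F 0 = {((0 : ℝ), (1 : ℝ))})
    -- the intervals are nondegenerate
    (hlt : ∀ k, ∀ p ∈ F k, p.1 < p.2)
    -- the intervals of each level `k ≥ 1` are mutually disjoint
    (hdisj : ∀ k, 1 ≤ k → ∀ p ∈ F k, ∀ q ∈ F k, p ≠ q →
      Disjoint (Set.Icc p.1 p.2) (Set.Icc q.1 q.2))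
    -- the first level is contained in `𝔼₀ = (0,1)`
    (hsub1 : ∀ p ∈ F 1, Set.Icc p.1 p.2 ⊆ Set.Ioo (0 : ℝ) 1)
    -- each level-(k+1) interval is contained in some level-k interval
    (hnest : ∀ k, 1 ≤ k → ∀ p ∈ F (k + 1), ∃ q ∈ F k,
      Set.Icc p.1 p.2 ⊆ Set.Icc q.1 q.2)
    -- each level-k interval contains at least two level-(k+1) intervals
    (hm : ∀ k, ∀ q ∈ F k,
      2 ≤ ((F (k + 1)).filter fun p => Set.Icc p.1 p.2 ⊆ Set.Icc q.1 q.2).card)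
    -- (1) gap condition: `ε_{k+1}(E_k) ≥ c·|E_k| / m_{k+1}(E_k)`
    (hgap : ∀ k, ∀ q ∈ F k, ∀ p ∈ F (k + 1), ∀ p' ∈ F (k + 1), p ≠ p' →
      Set.Icc p.1 p.2 ⊆ Set.Icc q.1 q.2 → Set.Icc p'.1 p'.2 ⊆ Set.Icc q.1 q.2 →
      ∀ x ∈ Set.Icc p.1 p.2, ∀ y ∈ Set.Icc p'.1 p'.2,
        c * (q.2 - q.1) /
            (((F (k + 1)).filter fun r => Set.Icc r.1 r.2 ⊆ Set.Icc q.1 q.2).card : ℝ) ≤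
          |x - y|)
    -- (2) counting condition: `|E_{k+1}|^δ ≥ |E_k|^δ / m_{k+1}(E_k)`
    (hlen : ∀ k, ∀ q ∈ F k, ∀ p ∈ F (k + 1), Set.Icc p.1 p.2 ⊆ Set.Icc q.1 q.2 →
      (q.2 - q.1) ^ δ /
          (((F (k + 1)).filter fun r => Set.Icc r.1 r.2 ⊆ Set.Icc q.1 q.2).card : ℝ) ≤
        (p.2 - p.1) ^ δ) :
    ENNReal.ofReal δ ≤
      dimH (Set.Ioo (0 : ℝ) 1 ∩ ⋂ k, ⋃ p ∈ F (k + 1), Set.Icc p.1 p.2) := by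
  have hS : IsCantorScheme F δ c := ⟨⟨hF0, hlt, hdisj, hsub1, hnest, hm⟩, hc, hgap, hlen⟩
  have := hS.ofReal_le_dimH_limitSet hδ.1 hδ.2
  rwa [← inter_eq_right.2 hS.limitSet_subset_Ioo] at this
end

section
/- Let α ∈ (0,1) be irrational with convergents p_n/q_n, η > 1, and C > 0. If there are infinitely many n such that a_{n+1} ≥ q_n^{η−1}, and for all sufficiently large n one has a_{n+1} ≤ C·q_n^{η−1}, then the diophantine type of α equals η, i.e., w(α) = η. -/
/-!
If `a_{n+1} ≥ q_n^{η-1}` then `|α - p_n/q_n| ≤ 1/(q_n q_{n+1}) < 1/q_n^{η+1}`, as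
`q_{n+1} > a_{n+1} q_n`; infinitely many such `n` give `w(α) ≥ η`. Conversely, the bound
`a_{n+1} ≤ C q_n^{η-1}` turns `|α - p_n/q_n| ≥ 1/(q_n (q_{n+1} + q_n))` into
`|α - p_n/q_n| ≥ c/q_n^{η+1}` for all `n` and some `c > 0`. If `|α - p/q| < 1/q^{w+1}` with
`w > η ≥ 1` and `q` large, Legendre's theorem makes `p/q` a convergent `p_n/q_n` with `q_n ≤ q`,
so `1/q^{w+1} > c/q^{η+1}`, which fails for large `q`; hence only finitely many such `p/q` exist.
-/

/-- The Gauss map `G(x) = {1/x}`. -/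
noncomputable def gaussMap (x : ℝ) : ℝ := Int.fract x⁻¹

/-- `pquot α n` is the `(n+1)`-st partial quotient `a_{n+1}` of `α` (0-based indexing). -/
noncomputable def pquot (α : ℝ) (n : ℕ) : ℕ := ⌊(gaussMap^[n] α)⁻¹⌋₊

/-- `qden a (n+1)` is the denominator `q_n` of `[a 0, …, a (n-1)]`, with `qden a 0 = 0`. -/
def qden (a : ℕ → ℕ) : ℕ → ℕ
  | 0 => 0
  | 1 => 1
  | (n + 2) => a n * qden a (n + 1) + qden a n

/-- The diophantine type of `α`: the supremum of those `w ≥ 1` such that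
`|α − p/q| < 1/q^{w+1}` for infinitely many rationals `p/q`. -/
noncomputable def diophType (α : ℝ) : ℝ :=
  sSup {w : ℝ | 1 ≤ w ∧
    {pq : ℤ × ℕ | 0 < pq.2 ∧
      |α - (pq.1 : ℝ) / (pq.2 : ℝ)| < 1 / (pq.2 : ℝ) ^ (w + 1)}.Infinite}

/-- `pnum a (n+1)` is the numerator `p_n` of `[0; a 0, …, a (n-1)]`, indexed like `qden`. -/
def pnum (a : ℕ → ℕ) : ℕ → ℕ
  | 0 => 1
  | 1 => 0
  | (n + 2) => a n * pnum a (n + 1) + pnum a n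

section Continuants

variable (a : ℕ → ℕ)

theorem qden_add_two (n : ℕ) : qden a (n + 2) = a n * qden a (n + 1) + qden a n := rfl

theorem pnum_add_two (n : ℕ) : pnum a (n + 2) = a n * pnum a (n + 1) + pnum a n := rfl

theorem pnum_mul_qden_sub_pnum_mul_qden (n : ℕ) :
    (pnum a n * qden a (n + 1) - pnum a (n + 1) * qden a n : ℤ) = (-1) ^ n := by
  induction n with
  | zero => simp [pnum, qden]
  | succ n ih =>
    rw [pnum_add_two, qden_add_two, pow_succ, ← ih]
    push_cast
    ring

theorem isCoprime_pnum_qden (n : ℕ) : IsCoprime (pnum a n : ℤ) (qden a n) := by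
  refine ⟨(-1) ^ n * qden a (n + 1), -((-1) ^ n * pnum a (n + 1)), ?_⟩
  calc (-1) ^ n * qden a (n + 1) * (pnum a n : ℤ) + -((-1) ^ n * pnum a (n + 1)) * qden a n
      = (-1) ^ n * (pnum a n * qden a (n + 1) - pnum a (n + 1) * qden a n : ℤ) := by ring
    _ = 1 := by rw [pnum_mul_qden_sub_pnum_mul_qden, ← pow_add, ← two_mul, pow_mul]; simp

theorem den_pnum_div_qden {n : ℕ} (hq : 0 < qden a n) :
    ((pnum a n : ℚ) / qden a n).den = qden a n := by
  have h := Rat.den_div_eq_of_coprime (a := pnum a n) (b := qden a n) (by exact_mod_cast hq)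
    (Int.isCoprime_iff_gcd_eq_one.mp (isCoprime_pnum_qden a n))
  simpa using h

variable {a} (ha : ∀ n, 0 < a n)
include ha

theorem qden_succ_pos (n : ℕ) : 0 < qden a (n + 1) := by
  induction n with
  | zero => simp [qden]
  | succ n ih => rw [qden_add_two]; have := ha n; positivity

theorem qden_le_qden_succ (n : ℕ) : qden a n ≤ qden a (n + 1) := by
  cases n with
  | zero => simp [qden]
  | succ n => rw [qden_add_two]; nlinarith [qden_succ_pos ha n, ha n]

theorem qden_strictMonoOn : StrictMonoOn (qden a) (Set.Ici 2) := by
  refine strictMonoOn_Ici_of_pred_lt fun n hn => ?_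
  obtain ⟨m, rfl⟩ := Nat.exists_eq_add_of_lt hn
  rw [Order.pred_eq_sub_one, show 2 + m + 1 - 1 = m + 2 by omega,
    show 2 + m + 1 = m + 1 + 2 by omega, qden_add_two a (m + 1)]
  nlinarith [qden_succ_pos ha m, qden_succ_pos ha (m + 1), ha (m + 1)]

end Continuants

theorem irrational_gaussMap {x : ℝ} (hx : Irrational x) : Irrational (gaussMap x) := by
  rw [gaussMap, ← Int.self_sub_floor]
  exact hx.inv.sub_intCast _

theorem gaussMap_pos_of_irrational {x : ℝ} (hx : Irrational x) : 0 < gaussMap x :=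
  (Int.fract_nonneg _).lt_of_ne' (irrational_gaussMap hx).ne_zero

theorem irrational_gaussMap_iterate {α : ℝ} (hirr : Irrational α) (n : ℕ) :
    Irrational (gaussMap^[n] α) := by
  induction n with
  | zero => exact hirr
  | succ n ih => rw [Function.iterate_succ_apply']; exact irrational_gaussMap ih

theorem exists_pos_forall_le_of_forall_ge {g : ℕ → ℝ} (hg : ∀ n, 0 < g n) {c : ℝ} (hc : 0 < c)
    {N : ℕ} (hN : ∀ n ≥ N, c ≤ g n) : ∃ c' > 0, ∀ n, c' ≤ g n := by
  induction N generalizing c with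
  | zero => exact ⟨c, hc, fun n => hN n n.zero_le⟩
  | succ N ih =>
    refine ih (lt_min hc (hg N)) fun n hn => ?_
    rcases hn.eq_or_lt with rfl | hn
    · exact min_le_right _ _
    · exact (min_le_left _ _).trans (hN n hn)

theorem Rat.den_intCast_div_natCast_le (p : ℤ) {q : ℕ} (hq : 0 < q) : ((p : ℚ) / q).den ≤ q := by
  have h := Rat.den_dvd p q
  rw [Rat.divInt_eq_div, Int.cast_natCast] at h
  exact_mod_cast Int.le_of_dvd (by exact_mod_cast hq) h

theorem finite_setOf_abs_sub_div_lt_one (α : ℝ) (M : ℕ) :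
    {pq : ℤ × ℕ | 0 < pq.2 ∧ pq.2 ≤ M ∧ |α - (pq.1 : ℝ) / (pq.2 : ℝ)| < 1}.Finite := by
  set K : ℤ := ⌈(|α| + 1) * M⌉
  refine ((Set.finite_Icc (-K) K).prod (Set.finite_Iic M)).subset ?_
  rintro ⟨p, q⟩ ⟨hq, hqM, hpq⟩
  refine ⟨abs_le.mp ?_, hqM⟩
  have hq' : (0 : ℝ) < q := by exact_mod_cast hq
  have hp : |(p : ℝ) / q| < |α| + 1 := by
    have := abs_sub_abs_le_abs_sub ((p : ℝ) / q) α
    rw [abs_sub_comm] at this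
    linarith
  rw [abs_div, Nat.abs_cast, div_lt_iff₀ hq'] at hp
  have : (|p| : ℝ) ≤ (|α| + 1) * M := by
    nlinarith [(by exact_mod_cast hqM : (q : ℝ) ≤ M), abs_nonneg α]
  exact_mod_cast this.trans (Int.le_ceil _)

-- `diophType α` unfolds to `sSup {w | 1 ≤ w ∧ (approxSet α w).Infinite}`.
def approxSet (α w : ℝ) : Set (ℤ × ℕ) :=
  {pq | 0 < pq.2 ∧ |α - (pq.1 : ℝ) / (pq.2 : ℝ)| < 1 / (pq.2 : ℝ) ^ (w + 1)}

theorem finite_approxSet_of_forall_le_abs_sub_rat {α η w c : ℝ} (hc : 0 < c) (hη : 1 ≤ η)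
    (hw : η < w)
    (hbound : ∀ r : ℚ, |α - r| < 1 / (2 * (r.den : ℝ) ^ 2) → c / (r.den : ℝ) ^ (η + 1) ≤ |α - r|) :
    (approxSet α w).Finite := by
  have hev : ∀ᶠ q : ℕ in Filter.atTop, 2 ≤ (q : ℝ) ^ (w - 1) ∧ 1 ≤ c * (q : ℝ) ^ (w - η) :=
    (((tendsto_rpow_atTop (by linarith)).comp tendsto_natCast_atTop_atTop).eventually_ge_atTop
      2).and ((((tendsto_rpow_atTop (by linarith)).const_mul_atTop hc).comp
        tendsto_natCast_atTop_atTop).eventually_ge_atTop 1)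
  obtain ⟨M, hM⟩ := Filter.eventually_atTop.mp hev
  refine (finite_setOf_abs_sub_div_lt_one α M).subset ?_
  rintro ⟨p, q⟩ ⟨hq, hpq⟩
  have hq' : (1 : ℝ) ≤ q := by exact_mod_cast hq
  have hle_one : 1 / (q : ℝ) ^ (w + 1) ≤ 1 :=
    div_le_one_of_le₀ (Real.one_le_rpow hq' (by linarith)) (by positivity)
  refine ⟨hq, ?_, hpq.trans_le hle_one⟩
  by_contra! hMq
  obtain ⟨h2, h1⟩ := hM q hMq.le
  set r : ℚ := p / q
  have hr : (r : ℝ) = p / q := by push_cast [r]; rfl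
  have hden : (r.den : ℝ) ≤ q := Nat.cast_le.mpr (Rat.den_intCast_div_natCast_le p hq)
  have hqpow : ∀ e : ℝ, (q : ℝ) ^ (w + 1) = (q : ℝ) ^ (w - e) * (q : ℝ) ^ (e + 1) := fun e => by
    rw [← Real.rpow_add (by positivity)]
    ring_nf
  have hleg : |α - r| < 1 / (2 * (r.den : ℝ) ^ 2) := calc
    |α - r| < 1 / (q : ℝ) ^ (w + 1) := hr ▸ hpq
    _ ≤ 1 / (2 * (q : ℝ) ^ 2) := by
      rw [hqpow 1, show (1 : ℝ) + 1 = (2 : ℕ) by norm_num, Real.rpow_natCast]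
      gcongr
    _ ≤ 1 / (2 * (r.den : ℝ) ^ 2) := by gcongr
  have hηpow : (0 : ℝ) < (q : ℝ) ^ (η + 1) := by positivity
  have := calc
    1 / (q : ℝ) ^ (w + 1) ≤ c / (q : ℝ) ^ (η + 1) := by
      rw [hqpow η, div_le_div_iff₀ (by positivity) hηpow]
      nlinarith [mul_le_mul_of_nonneg_right h1 hηpow.le]
    _ ≤ c / (r.den : ℝ) ^ (η + 1) := by gcongr
    _ ≤ |α - r| := hbound r hleg
    _ < 1 / (q : ℝ) ^ (w + 1) := hr ▸ hpq
  exact this.false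

section ContinuedFractionOf

open GenContFract

variable {α : ℝ} (hα : α ∈ Set.Ioo (0 : ℝ) 1) (hirr : Irrational α)

include hα hirr

theorem gaussMap_iterate_mem_Ioo (n : ℕ) : gaussMap^[n] α ∈ Set.Ioo (0 : ℝ) 1 := by
  cases n with
  | zero => exact hα
  | succ n =>
    rw [Function.iterate_succ_apply']
    exact ⟨gaussMap_pos_of_irrational (irrational_gaussMap_iterate hirr n), Int.fract_lt_one _⟩

theorem pquot_pos (n : ℕ) : 0 < pquot α n := by
  obtain ⟨h0, h1⟩ := gaussMap_iterate_mem_Ioo hα hirr n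
  exact Nat.floor_pos.mpr (one_le_inv₀ h0 |>.mpr h1.le)

theorem exists_intFractPair_stream_fr_eq (n : ℕ) :
    ∃ ifp, IntFractPair.stream α n = some ifp ∧ ifp.fr = gaussMap^[n] α := by
  induction n with
  | zero =>
    refine ⟨IntFractPair.of α, IntFractPair.stream_zero α, ?_⟩
    exact Int.fract_eq_self.mpr ⟨hα.1.le, hα.2⟩
  | succ n ih =>
    obtain ⟨ifp, hs, hfr⟩ := ih
    have hne : ifp.fr ≠ 0 := hfr ▸ (gaussMap_iterate_mem_Ioo hα hirr n).1.ne'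
    refine ⟨_, IntFractPair.stream_succ_of_some hs hne, ?_⟩
    rw [Function.iterate_succ_apply', ← hfr]
    rfl

theorem of_s_get?_eq_pquot (n : ℕ) :
    (GenContFract.of α).s.get? n = some ⟨1, (pquot α n : ℝ)⟩ := by
  obtain ⟨ifp, hs, hfr⟩ := exists_intFractPair_stream_fr_eq hα hirr n
  have hpos := (gaussMap_iterate_mem_Ioo hα hirr n).1
  rw [get?_of_eq_some_of_get?_intFractPair_stream_fr_ne_zero hs (hfr ▸ hpos.ne'), hfr]
  simp [IntFractPair.of, pquot, ← Int.natCast_floor_eq_floor (inv_pos.mpr hpos).le]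

theorem not_terminatedAt_of (n : ℕ) : ¬(GenContFract.of α).TerminatedAt n := by
  simp [terminatedAt_iff_s_none, of_s_get?_eq_pquot hα hirr n]

theorem of_contsAux_eq (n : ℕ) :
    (GenContFract.of α).contsAux n = ⟨(pnum (pquot α) n : ℝ), (qden (pquot α) n : ℝ)⟩ := by
  induction n using Nat.twoStepInduction with
  | zero => simp [contsAux, pnum, qden]
  | one => simp [contsAux, pnum, qden, of_h_eq_floor, Int.floor_eq_zero_iff.mpr ⟨hα.1.le, hα.2⟩]
  | more n ih0 ih1 =>
    rw [contsAux_recurrence (of_s_get?_eq_pquot hα hirr n) ih0 ih1, pnum_add_two, qden_add_two]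
    simp

theorem of_dens_eq (n : ℕ) : (GenContFract.of α).dens n = qden (pquot α) (n + 1) := by
  rw [den_eq_conts_b, nth_cont_eq_succ_nth_contAux, of_contsAux_eq hα hirr]

theorem of_convs_eq (n : ℕ) :
    (GenContFract.of α).convs n =
      (((pnum (pquot α) (n + 1) : ℚ) / qden (pquot α) (n + 1) : ℚ) : ℝ) := by
  rw [conv_eq_conts_a_div_conts_b, nth_cont_eq_succ_nth_contAux, of_contsAux_eq hα hirr]
  push_cast
  rfl

theorem abs_sub_of_convs_le (n : ℕ) :
    |α - (GenContFract.of α).convs n| ≤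
      1 / (qden (pquot α) (n + 1) * qden (pquot α) (n + 2) : ℝ) := by
  simpa only [of_dens_eq hα hirr] using abs_sub_convs_le (not_terminatedAt_of hα hirr n)

theorem le_abs_sub_of_convs (n : ℕ) :
    1 / (qden (pquot α) (n + 1) * (qden (pquot α) (n + 2) + qden (pquot α) (n + 1)) : ℝ) ≤
      |α - (GenContFract.of α).convs n| := by
  obtain ⟨ifp, hs, hfr⟩ := exists_intFractPair_stream_fr_eq hα hirr n
  obtain ⟨hx0, -⟩ := gaussMap_iterate_mem_Ioo hα hirr n
  have hq := qden_succ_pos (pquot_pos hα hirr) n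
  set q : ℝ := (qden (pquot α) (n + 1) : ℝ)
  set q' : ℝ := (qden (pquot α) n : ℝ)
  -- `(gaussMap^[n] α)⁻¹` is the complete quotient, which lies below `a_{n+1} + 1`
  have hlt : ifp.fr⁻¹ < pquot α n + 1 := hfr ▸ Nat.lt_floor_add_one _
  have hden : 0 < q * (ifp.fr⁻¹ * q + q') := by
    have : 0 < ifp.fr := hfr ▸ hx0
    positivity
  have hrec : (qden (pquot α) (n + 2) : ℝ) = pquot α n * q + q' := by
    rw [qden_add_two]; push_cast; rfl
  have key := sub_convs_eq hs
  simp only [hfr ▸ hx0.ne', if_false, of_contsAux_eq hα hirr] at key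
  rw [key, abs_div, abs_pow, abs_neg, abs_one, one_pow, abs_of_pos hden, hrec]
  refine one_div_le_one_div_of_le hden (mul_le_mul_of_nonneg_left ?_ (by positivity))
  have : ifp.fr⁻¹ * q ≤ (pquot α n + 1) * q := by gcongr
  linarith [(by positivity : (0 : ℝ) ≤ q')]

theorem abs_sub_convs_lt_of_rpow_le_pquot {η : ℝ} {n : ℕ} (hn : 1 ≤ n)
    (hlarge : (qden (pquot α) (n + 1) : ℝ) ^ (η - 1) ≤ pquot α n) :
    |α - (GenContFract.of α).convs n| < 1 / (qden (pquot α) (n + 1) : ℝ) ^ (η + 1) := by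
  have ha := pquot_pos hα hirr
  have hq : (0 : ℝ) < qden (pquot α) (n + 1) := by exact_mod_cast qden_succ_pos ha n
  have hq' : (0 : ℝ) < qden (pquot α) n := by
    obtain ⟨m, rfl⟩ := Nat.exists_eq_add_of_le' hn
    exact_mod_cast qden_succ_pos ha m
  refine (abs_sub_of_convs_le hα hirr n).trans_lt (one_div_lt_one_div_of_lt (by positivity) ?_)
  rw [show η + 1 = (η - 1) + (2 : ℕ) by push_cast; ring, Real.rpow_add_natCast hq.ne',
    qden_add_two]
  push_cast
  nlinarith [mul_le_mul_of_nonneg_right hlarge (sq_nonneg (qden (pquot α) (n + 1) : ℝ))]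

theorem infinite_approxSet_of_infinite_setOf_rpow_le_pquot {η : ℝ}
    (hinf : {n : ℕ | (qden (pquot α) (n + 1) : ℝ) ^ (η - 1) ≤ pquot α n}.Infinite) :
    (approxSet α η).Infinite := by
  set T := {n : ℕ | (qden (pquot α) (n + 1) : ℝ) ^ (η - 1) ≤ pquot α n} \ {0}
  have hinj : Set.InjOn (fun n => ((pnum (pquot α) (n + 1) : ℤ), qden (pquot α) (n + 1))) T := by
    intro m ⟨_, hm⟩ n ⟨_, hn⟩ h
    have := (qden_strictMonoOn (pquot_pos hα hirr)).injOn
      (show m + 1 ∈ Set.Ici 2 by simp_all; omega) (show n + 1 ∈ Set.Ici 2 by simp_all; omega)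
      (congrArg Prod.snd h)
    omega
  refine ((hinf.sdiff (Set.finite_singleton 0)).image hinj).mono ?_
  rintro _ ⟨n, ⟨hlarge, hn⟩, rfl⟩
  refine ⟨qden_succ_pos (pquot_pos hα hirr) n, ?_⟩
  have := abs_sub_convs_lt_of_rpow_le_pquot hα hirr (Nat.one_le_iff_ne_zero.mpr hn) hlarge
  rw [of_convs_eq hα hirr] at this
  push_cast at this ⊢
  exact this

theorem one_div_le_abs_sub_convs_of_pquot_le {η C : ℝ} (hη : 1 ≤ η) {n : ℕ}
    (hsmall : (pquot α n : ℝ) ≤ C * (qden (pquot α) (n + 1) : ℝ) ^ (η - 1)) :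
    1 / ((C + 2) * (qden (pquot α) (n + 1) : ℝ) ^ (η + 1)) ≤ |α - (GenContFract.of α).convs n| := by
  have ha := pquot_pos hα hirr
  have hq : (1 : ℝ) ≤ qden (pquot α) (n + 1) := by exact_mod_cast qden_succ_pos ha n
  have hq' : (qden (pquot α) n : ℝ) ≤ qden (pquot α) (n + 1) := by
    exact_mod_cast qden_le_qden_succ ha n
  set q : ℝ := (qden (pquot α) (n + 1) : ℝ)
  have hX : 1 ≤ q ^ (η - 1) := Real.one_le_rpow hq (by linarith)
  refine le_trans (one_div_le_one_div_of_le (by positivity) ?_) (le_abs_sub_of_convs hα hirr n)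
  rw [show η + 1 = (η - 1) + (2 : ℕ) by push_cast; ring, Real.rpow_add_natCast (by positivity),
    qden_add_two]
  push_cast
  nlinarith [mul_le_mul_of_nonneg_right hsmall (hq.trans' zero_le_one),
    mul_le_mul_of_nonneg_left hX (sq_nonneg q)]

theorem exists_pos_le_abs_sub_convs {η C : ℝ} (hη : 1 ≤ η) (hC : 0 < C)
    (hbd : ∃ N : ℕ, ∀ n ≥ N, (pquot α n : ℝ) ≤ C * (qden (pquot α) (n + 1) : ℝ) ^ (η - 1)) :
    ∃ c > 0, ∀ n,
      c / (qden (pquot α) (n + 1) : ℝ) ^ (η + 1) ≤ |α - (GenContFract.of α).convs n| := by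
  obtain ⟨N, hN⟩ := hbd
  have hpow : ∀ n, (0 : ℝ) < (qden (pquot α) (n + 1) : ℝ) ^ (η + 1) := fun n => by
    have := qden_succ_pos (pquot_pos hα hirr) n
    positivity
  have hne : ∀ n, 0 < |α - (GenContFract.of α).convs n| := fun n => by
    rw [abs_pos, sub_ne_zero, of_convs_eq hα hirr]
    exact hirr.ne_rat _
  obtain ⟨c, hc, hle⟩ := exists_pos_forall_le_of_forall_ge
    (g := fun n => |α - (GenContFract.of α).convs n| * (qden (pquot α) (n + 1) : ℝ) ^ (η + 1))
    (fun n => mul_pos (hne n) (hpow n)) (one_div_pos.mpr (by linarith : 0 < C + 2))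
    fun n hn => by
      rw [← div_le_iff₀ (hpow n), div_div]
      exact one_div_le_abs_sub_convs_of_pquot_le hα hirr hη (hN n hn)
  exact ⟨c, hc, fun n => (div_le_iff₀ (hpow n)).mpr (hle n)⟩

theorem exists_pos_le_abs_sub_rat {η C : ℝ} (hη : 1 ≤ η) (hC : 0 < C)
    (hbd : ∃ N : ℕ, ∀ n ≥ N, (pquot α n : ℝ) ≤ C * (qden (pquot α) (n + 1) : ℝ) ^ (η - 1)) :
    ∃ c > 0, ∀ r : ℚ, |α - r| < 1 / (2 * (r.den : ℝ) ^ 2) →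
      c / (r.den : ℝ) ^ (η + 1) ≤ |α - r| := by
  obtain ⟨c, hc, hconvs⟩ := exists_pos_le_abs_sub_convs hα hirr hη hC hbd
  refine ⟨c, hc, fun r hr => ?_⟩
  -- Legendre: `r` is a convergent, and convergents are in lowest terms
  obtain ⟨n, hn⟩ := Real.exists_convs_eq_rat hr
  have hr' : r = (pnum (pquot α) (n + 1) : ℚ) / qden (pquot α) (n + 1) :=
    Rat.cast_injective (hn.symm.trans (of_convs_eq hα hirr n))
  have hden := den_pnum_div_qden _ (qden_succ_pos (pquot_pos hα hirr) n)
  rw [← hr'] at hden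
  simpa only [hn, hden] using hconvs n

end ContinuedFractionOf

/-- If `a_{n+1} ≥ q_n^{η−1}` for infinitely many `n` and `a_{n+1} ≤ C·q_n^{η−1}` for all
large `n`, then the diophantine type of `α` equals `η`. -/
theorem stmt12 (α : ℝ) (hα : α ∈ Set.Ioo (0 : ℝ) 1) (hirr : Irrational α)
    (η C : ℝ) (hη : 1 < η) (hC : 0 < C)
    (hinf : {n : ℕ |
      (qden (pquot α) (n + 1) : ℝ) ^ (η - 1) ≤ (pquot α n : ℝ)}.Infinite)
    (hbd : ∃ N : ℕ, ∀ n ≥ N,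
      (pquot α n : ℝ) ≤ C * (qden (pquot α) (n + 1) : ℝ) ^ (η - 1)) :
    diophType α = η := by
  obtain ⟨c, hc, hbound⟩ := exists_pos_le_abs_sub_rat hα hirr hη.le hC hbd
  have hηmem := infinite_approxSet_of_infinite_setOf_rpow_le_pquot hα hirr hinf
  refine IsGreatest.csSup_eq ⟨⟨hη.le, hηmem⟩, ?_⟩
  rintro w ⟨-, hw⟩
  by_contra! hηw
  exact hw (finite_approxSet_of_forall_le_abs_sub_rat hc hη.le hηw hbound)
end

section
/- Let 𝒜 be a finite alphabet with d letters, (π, τ) combinatorial and suspension data with τ_* := Σ_{χ∈𝒜} τ_χ < 0, and let H := max_α h_α where h_α = Σ_{π_t(χ)<π_t(α)} τ_χ − Σ_{π_b(χ)<π_b(α)} τ_χ. Fix an integer M ≥ d+1 and assume max_χ ξ^t_χ < H/M, where ξ^t_χ = Σ_{π_t(χ')<π_t(χ)} τ_{χ'}. Let A be an integer with 1 ≤ A ≤ M−d and α ∈ 𝒜 with π_b(α) ≥ 2 such that ξ^b_α < −((M−A)/M)·H, where ξ^b_α = Σ_{π_b(χ)<π_b(α)} τ_χ. Then for every letter χ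 with π_b(α) ≤ π_b(χ) ≤ d one has ξ^b_χ < −((M+2−A−d)/M)·H, and moreover τ_* ≤ −((M+1−A−d)/M)·H. -/
/-!
Write `ξ_c` as the prefix sum of `τ` up to the position of `c`. By the top suspension condition
the top prefix sums are nonnegative, and they are below `H/M` except the last one, which is
`τ_* < 0`; so every `τ_c`, a difference of two consecutive top prefix sums, is below `H/M`.
Along the bottom order the prefix sums therefore grow from `ξ^b_α` by at most `H/M` per letter,
over at most `d - 2` letters up to any later `ξ^b_χ` (as `α` is not first) and at most `d - 1`
letters up to the full sum `τ_*`.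
-/

open Finset

section PrefixSum

variable {ι β : Type*} [Fintype ι] {d : ℕ} (π : ι ≃ Fin d)

def prefixSum [AddCommMonoid β] (τ : ι → β) (k : ℕ) : β :=
  ∑ χ ∈ univ.filter (fun χ => (π χ : ℕ) < k), τ χ

section AddCommMonoid

variable [AddCommMonoid β] (τ : ι → β)

@[simp]
theorem prefixSum_zero : prefixSum π τ 0 = 0 := by
  simp [prefixSum]

theorem prefixSum_of_le {k : ℕ} (hk : d ≤ k) : prefixSum π τ k = ∑ χ, τ χ := by
  rw [prefixSum, filter_true_of_mem fun χ _ => (π χ).isLt.trans_le hk]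

theorem prefixSum_succ {k : ℕ} (hk : k < d) :
    prefixSum π τ (k + 1) = prefixSum π τ k + τ (π.symm ⟨k, hk⟩) := by
  classical
  have hfilter : univ.filter (fun χ => (π χ : ℕ) < k + 1) =
      insert (π.symm ⟨k, hk⟩) (univ.filter (fun χ => (π χ : ℕ) < k)) := by
    ext χ
    simp only [mem_filter, mem_univ, true_and, mem_insert, Equiv.eq_symm_apply,
      Fin.ext_iff, Nat.lt_succ_iff_lt_or_eq, or_comm]
  rw [prefixSum, hfilter, sum_insert (by simp), add_comm]
  rfl

end AddCommMonoid

variable (τ : ι → ℝ)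

theorem prefixSum_le_add_mul {b : ℝ} (hτ : ∀ c, τ c ≤ b) {k m : ℕ} (hkm : k ≤ m)
    (hmd : m ≤ d) : prefixSum π τ m ≤ prefixSum π τ k + ((m : ℝ) - k) * b := by
  induction m, hkm using Nat.le_induction with
  | base => simp
  | succ m hkm ih =>
    rw [prefixSum_succ π τ hmd]
    have := hτ (π.symm ⟨m, hmd⟩)
    push_cast
    linarith [ih (Nat.le_of_succ_le hmd)]

theorem prefixSum_le_of_sub_le {b : ℝ} (hτ : ∀ c, τ c ≤ b) (hb : 0 ≤ b) {k m : ℕ}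
    {j : ℝ} (hkm : k ≤ m) (hmd : m ≤ d) (hj : (m : ℝ) - k ≤ j) :
    prefixSum π τ m ≤ prefixSum π τ k + j * b := by
  linarith [prefixSum_le_add_mul π τ hτ hkm hmd, mul_le_mul_of_nonneg_right hj hb]

theorem prefixSum_nonneg_of_suspension
    (hsus : ∀ c, (π c : ℕ) ≠ 0 → 0 < prefixSum π τ (π c)) {k : ℕ} (hk : k < d) :
    0 ≤ prefixSum π τ k := by
  rcases Nat.eq_zero_or_pos k with rfl | hk0
  · simp
  · simpa using (hsus (π.symm ⟨k, hk⟩) (by simpa using hk0.ne')).le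

theorem lt_of_suspension_of_sum_neg {b : ℝ}
    (hsus : ∀ c, (π c : ℕ) ≠ 0 → 0 < prefixSum π τ (π c)) (hsum : ∑ χ, τ χ < 0)
    (hξ : ∀ c, prefixSum π τ (π c) < b) (c : ι) : τ c < b := by
  have hk := (π c).isLt
  have hsucc := prefixSum_succ π τ hk
  simp only [Fin.eta, Equiv.symm_apply_apply] at hsucc
  have hnext : prefixSum π τ ((π c : ℕ) + 1) < b := by
    rcases (Nat.succ_le_of_lt hk).lt_or_eq with hlt | heq
    · simpa using hξ (π.symm ⟨_, hlt⟩)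
    · linarith [hξ c, prefixSum_nonneg_of_suspension π τ hsus hk,
        prefixSum_of_le π τ heq.ge]
  linarith [prefixSum_nonneg_of_suspension π τ hsus hk]

end PrefixSum

theorem stmt18_general {ALPH : Type*} [Fintype ALPH]
    (d : ℕ)
    (πt πb : ALPH ≃ Fin d) (τ : ALPH → ℝ)
    (hsusT : ∀ α : ALPH, (πt α).val ≠ 0 →
      0 < ∑ χ ∈ Finset.univ.filter (fun χ => πt χ < πt α), τ χ)
    (hτ : (∑ χ, τ χ) < 0)
    (H : ℝ)
    (M : ℕ)
    (hξt : ∀ χ : ALPH,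
      (∑ χ' ∈ Finset.univ.filter (fun χ' => πt χ' < πt χ), τ χ') < H / (M : ℝ))
    (A : ℕ)
    (α : ALPH) (hα : 1 ≤ (πb α).val)
    (hαb : (∑ χ ∈ Finset.univ.filter (fun χ => πb χ < πb α), τ χ) <
      -(((M : ℝ) - (A : ℝ)) / (M : ℝ)) * H) :
    (∀ χ : ALPH, πb α ≤ πb χ →
      (∑ χ' ∈ Finset.univ.filter (fun χ' => πb χ' < πb χ), τ χ') <
        -(((M : ℝ) + 2 - (A : ℝ) - (d : ℝ)) / (M : ℝ)) * H) ∧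
    (∑ χ, τ χ) ≤ -(((M : ℝ) + 1 - (A : ℝ) - (d : ℝ)) / (M : ℝ)) * H := by
  have hξt' : ∀ c, prefixSum πt τ (πt c) < H / M := hξt
  have hb : 0 ≤ H / M :=
    (prefixSum_nonneg_of_suspension πt τ hsusT (πt α).isLt).trans (hξt α).le
  have hτb : ∀ c, τ c ≤ H / M := fun c =>
    (lt_of_suspension_of_sum_neg πt τ hsusT hτ hξt' c).le
  have hα' : (1 : ℝ) ≤ (πb α : ℕ) := by exact_mod_cast hα
  constructor
  · intro χ hχ
    have hχd : ((πb χ : ℕ) : ℝ) + 1 ≤ d := by exact_mod_cast (πb χ).isLt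
    calc prefixSum πb τ (πb χ) ≤ prefixSum πb τ (πb α) + ((d : ℝ) - 2) * (H / M) :=
          prefixSum_le_of_sub_le πb τ hτb hb hχ (πb χ).isLt.le (by linarith)
      _ < -(((M : ℝ) - A) / M) * H + ((d : ℝ) - 2) * (H / M) := by gcongr; exact hαb
      _ = _ := by ring
  · calc ∑ χ, τ χ = prefixSum πb τ d := (prefixSum_of_le πb τ le_rfl).symm
      _ ≤ prefixSum πb τ (πb α) + ((d : ℝ) - 1) * (H / M) :=
          prefixSum_le_of_sub_le πb τ hτb hb (πb α).isLt.le le_rfl (by linarith)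
      _ ≤ -(((M : ℝ) - A) / M) * H + ((d : ℝ) - 1) * (H / M) := by gcongr; exact hαb.le
      _ = _ := by ring

/-- Lemma on zippered rectangles with `τ_* < 0`: if all top singularity coordinates satisfy
`ξ^t_χ < H/M` (where `H = max h` and `M ≥ d+1`), and some letter `α` with `π_b(α) ≥ 2` has
`ξ^b_α < −((M−A)/M)·H` for some `1 ≤ A ≤ M−d`, then every letter `χ` with
`π_b(α) ≤ π_b(χ)` satisfies `ξ^b_χ < −((M+2−A−d)/M)·H`, and `τ_* ≤ −((M+1−A−d)/M)·H`. -/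
theorem stmt18 {ALPH : Type*} [Fintype ALPH] [DecidableEq ALPH] [Nonempty ALPH]
    (d : ℕ) (hd : Fintype.card ALPH = d)
    (πt πb : ALPH ≃ Fin d) (τ : ALPH → ℝ)
    (hsusT : ∀ α : ALPH, (πt α).val ≠ 0 →
      0 < ∑ χ ∈ Finset.univ.filter (fun χ => πt χ < πt α), τ χ)
    (hsusB : ∀ α : ALPH, (πb α).val ≠ 0 →
      (∑ χ ∈ Finset.univ.filter (fun χ => πb χ < πb α), τ χ) < 0)
    (hτ : (∑ χ, τ χ) < 0)
    (H : ℝ)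
    (hH : IsGreatest (Set.range fun α : ALPH =>
      (∑ χ ∈ Finset.univ.filter (fun χ => πt χ < πt α), τ χ) -
        ∑ χ ∈ Finset.univ.filter (fun χ => πb χ < πb α), τ χ) H)
    (M : ℕ) (hM : d + 1 ≤ M)
    (hξt : ∀ χ : ALPH,
      (∑ χ' ∈ Finset.univ.filter (fun χ' => πt χ' < πt χ), τ χ') < H / (M : ℝ))
    (A : ℕ) (hA1 : 1 ≤ A) (hA2 : A ≤ M - d)
    (α : ALPH) (hα : 1 ≤ (πb α).val)
    (hαb : (∑ χ ∈ Finset.univ.filter (fun χ => πb χ < πb α), τ χ) <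
      -(((M : ℝ) - (A : ℝ)) / (M : ℝ)) * H) :
    (∀ χ : ALPH, πb α ≤ πb χ →
      (∑ χ' ∈ Finset.univ.filter (fun χ' => πb χ' < πb χ), τ χ') <
        -(((M : ℝ) + 2 - (A : ℝ) - (d : ℝ)) / (M : ℝ)) * H) ∧
    (∑ χ, τ χ) ≤ -(((M : ℝ) + 1 - (A : ℝ) - (d : ℝ)) / (M : ℝ)) * H :=
  stmt18_general d πt πb τ hsusT hτ H M hξt A α hα hαb
end

section
/- Let T_α: [0,1) → [0,1), x ↦ x + α mod 1 be the rotation by an irrational α. For every point p ∈ [0,1), the liminf recurrence exponent satisfies w̲_rec(T_α, p) = 1/w(α), where w̲_rec(T_α, p) = liminf_{r→0+} log R(T_α, p, r)/(−log r), R(T_α, p, r) = min{n ≥ 1 : ‖nα‖ < r} with ‖x‖ the distance to the nearest integer, and w(α) is the diophantine type of α. -/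
open scoped ENNReal

/-- Distance of a real number to the nearest integer. -/
noncomputable def nearestIntDist (x : ℝ) : ℝ := |x - round x|

/-- Recurrence time of `p` at scale `r` for the rotation `T_α(x) = x + α (mod 1)`:
the least `n ≥ 1` with `‖T_α^n p − p‖ < r` (distance on the circle `ℝ/ℤ`). -/
noncomputable def rotRecTime (α p r : ℝ) : ℕ :=
  sInf {n : ℕ | 1 ≤ n ∧ nearestIntDist ((fun x => Int.fract (x + α))^[n] p - p) < r}

/-- The diophantine type of `α` as an extended real: the supremum of those `w ≥ 1` for which
`|qα − p| < 1/q^w` has infinitely many integer solutions `(p, q)` with `q ≥ 1`. -/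
noncomputable def diophTypeE (α : ℝ) : ℝ≥0∞ :=
  sSup (ENNReal.ofReal '' {w : ℝ | 1 ≤ w ∧
    {pq : ℤ × ℕ | 0 < pq.2 ∧
      |(pq.2 : ℝ) * α - (pq.1 : ℝ)| < 1 / (pq.2 : ℝ) ^ w}.Infinite})

/-!
Since `T_α^n p − p ≡ nα (mod 1)`, the recurrence time is `R(r) = min {n ≥ 1 : ‖nα‖ < r}` whatever
`p` is. If `‖qα‖ < q^(-w)` for infinitely many `q`, then at the scales `r = q^(-w)` we have
`R(r) ≤ q = r^(-1/w)`, so the liminf is at most `1/w`. If instead `‖qα‖ ≥ q^(-w)` for all large `q`,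
then, since irrationality forces `R(r) → ∞` as `r → 0`, we get `R(r)^(-w) ≤ ‖R(r) α‖ < r` for small
`r`, so the liminf is at least `1/w`. Dirichlet's theorem supplies `w(α) ≥ 1`, which makes these two
bounds determine the liminf as `1/w(α)`.
-/

open Filter Topology

theorem nearestIntDist_sub_intCast (x : ℝ) (m : ℤ) : nearestIntDist (x - m) = nearestIntDist x := by
  simp only [nearestIntDist, round_sub_intCast, Int.cast_sub, sub_sub_sub_cancel_right]

theorem nearestIntDist_le_abs_sub_intCast (x : ℝ) (m : ℤ) : nearestIntDist x ≤ |x - m| :=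
  round_le x m

theorem Irrational.nearestIntDist_natCast_mul_pos {α : ℝ} (hα : Irrational α) {n : ℕ}
    (hn : n ≠ 0) : 0 < nearestIntDist (n * α) :=
  abs_pos.2 <| sub_ne_zero.2 <| (hα.natCast_mul hn).ne_int _

theorem exists_nearestIntDist_natCast_mul_lt (α : ℝ) {r : ℝ} (hr : 0 < r) :
    ∃ n : ℕ, 1 ≤ n ∧ nearestIntDist (n * α) < r := by
  obtain ⟨N, hN⟩ := exists_nat_gt r⁻¹
  have hN0 : 0 < N := by exact_mod_cast (inv_pos.2 hr).trans hN
  obtain ⟨n, hn0, -, hn⟩ := Real.exists_nat_abs_mul_sub_round_le α hN0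
  refine ⟨n, hn0, hn.trans_lt ?_⟩
  rw [one_div, inv_lt_comm₀ (by positivity) hr]
  linarith

theorem exists_iterate_fract_add_eq (α p : ℝ) (n : ℕ) :
    ∃ m : ℤ, (fun x => Int.fract (x + α))^[n] p = p + n * α - m := by
  induction n with
  | zero => exact ⟨0, by simp⟩
  | succ n ih =>
    obtain ⟨m, hm⟩ := ih
    refine ⟨m + ⌊p + n * α - m + α⌋, ?_⟩
    rw [Function.iterate_succ_apply', hm, Int.fract]
    push_cast
    ring

noncomputable def returnTime (α r : ℝ) : ℕ :=
  sInf {n : ℕ | 1 ≤ n ∧ nearestIntDist (n * α) < r}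

theorem rotRecTime_eq_returnTime (α p r : ℝ) : rotRecTime α p r = returnTime α r := by
  unfold rotRecTime returnTime
  congr! 4 with n
  obtain ⟨m, hm⟩ := exists_iterate_fract_add_eq α p n
  rw [hm, show p + n * α - m - p = n * α - m by ring, nearestIntDist_sub_intCast]

section returnTime

variable {α r : ℝ}

theorem returnTime_le {n : ℕ} (hn : 1 ≤ n) (h : nearestIntDist (n * α) < r) :
    returnTime α r ≤ n :=
  Nat.sInf_le ⟨hn, h⟩

theorem returnTime_mem (hr : 0 < r) :
    1 ≤ returnTime α r ∧ nearestIntDist (returnTime α r * α) < r :=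
  Nat.sInf_mem (exists_nearestIntDist_natCast_mul_lt α hr)

theorem Irrational.tendsto_returnTime (hα : Irrational α) :
    Tendsto (returnTime α) (𝓝[>] 0) atTop := by
  refine tendsto_atTop.2 fun N => ?_
  have hsmall : ∀ᶠ r in 𝓝[>] (0 : ℝ), ∀ n ∈ Finset.Ico 1 N, r < nearestIntDist (n * α) := by
    refine (eventually_all_finset _).2 fun n hn => nhdsWithin_le_nhds <| Iio_mem_nhds <|
      hα.nearestIntDist_natCast_mul_pos <| Nat.one_le_iff_ne_zero.1 (Finset.mem_Ico.1 hn).1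
  filter_upwards [hsmall, self_mem_nhdsWithin] with r hr hr0
  obtain ⟨h1, hlt⟩ := returnTime_mem (α := α) hr0
  by_contra! hN
  exact (hr _ (Finset.mem_Ico.2 ⟨h1, hN⟩)).not_gt hlt

end returnTime

noncomputable def approxPairs (α w : ℝ) : Set (ℤ × ℕ) :=
  {pq | 0 < pq.2 ∧ |(pq.2 : ℝ) * α - (pq.1 : ℝ)| < 1 / (pq.2 : ℝ) ^ w}

theorem diophTypeE_eq (α : ℝ) :
    diophTypeE α = sSup (ENNReal.ofReal '' {w | 1 ≤ w ∧ (approxPairs α w).Infinite}) :=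
  rfl

theorem setOf_abs_sub_intCast_lt_one_finite (x : ℝ) : {m : ℤ | |x - m| < 1}.Finite := by
  refine (Set.finite_Icc ⌈x - 1⌉ ⌊x + 1⌋).subset fun m hm => ?_
  rw [Set.mem_ofPred, abs_lt] at hm
  exact ⟨Int.ceil_le.2 (by linarith), Int.le_floor.2 (by linarith)⟩

section approxPairs

variable {α w : ℝ}

theorem approxPairs_infinite_iff (hw : 0 ≤ w) :
    (approxPairs α w).Infinite ↔ ∃ᶠ q : ℕ in atTop, nearestIntDist (q * α) < 1 / (q : ℝ) ^ w := by
  constructor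
  · intro hinf
    by_contra! hfin
    obtain ⟨N, hN⟩ := eventually_atTop.1 hfin
    refine hinf <| Set.Finite.subset (s := ⋃ q ∈ Set.Iio N, (·, q) '' {m : ℤ | |q * α - m| < 1})
      ((Set.finite_Iio N).biUnion fun q _ => (setOf_abs_sub_intCast_lt_one_finite _).image _) ?_
    rintro ⟨m, q⟩ ⟨hq, hlt⟩
    have hqN : q < N := by
      by_contra! hNq
      exact (hN q hNq).not_gt ((nearestIntDist_le_abs_sub_intCast _ m).trans_lt hlt)
    have hq1 : (1 : ℝ) ≤ (q : ℝ) ^ w := Real.one_le_rpow (by exact_mod_cast hq) hw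
    exact Set.mem_biUnion hqN
      ⟨m, hlt.trans_le (div_le_one_of_le₀ hq1 (zero_le_one.trans hq1)), rfl⟩
  · intro hfreq
    have hB := Nat.frequently_atTop_iff_infinite.1 (hfreq.and_eventually (eventually_gt_atTop 0))
    refine Set.infinite_of_injOn_mapsTo (f := fun q : ℕ => (round (q * α), q))
      (fun a _ b _ hab => congrArg Prod.snd hab) (fun q hq => ?_) hB
    exact ⟨hq.2, hq.1⟩

theorem Irrational.approxPairs_one_infinite (hα : Irrational α) : (approxPairs α 1).Infinite := by
  refine Set.infinite_of_injOn_mapsTo (f := fun q : ℚ => (q.num, q.den))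
    (fun a _ b _ hab => Rat.ext (congrArg Prod.fst hab) (congrArg Prod.snd hab)) (fun q hq => ?_)
    (Real.infinite_rat_abs_sub_lt_one_div_den_sq_of_irrational hα)
  have hden : (0 : ℝ) < q.den := by exact_mod_cast q.pos
  refine ⟨q.pos, ?_⟩
  calc |(q.den : ℝ) * α - q.num| = q.den * |α - q| := by
        rw [← abs_of_pos hden, ← abs_mul, abs_of_pos hden, mul_sub, Rat.cast_def,
          mul_div_cancel₀ _ hden.ne']
    _ < q.den * (1 / (q.den : ℝ) ^ 2) := mul_lt_mul_of_pos_left hq hden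
    _ = 1 / (q.den : ℝ) ^ (1 : ℝ) := by rw [Real.rpow_one]; field_simp

end approxPairs

section logRatio

variable {n r w : ℝ}

theorem Real.log_div_neg_log_le_inv_iff (hn : 0 < n) (hr0 : 0 < r) (hr1 : r < 1) (hw : 0 < w) :
    Real.log n / -Real.log r ≤ w⁻¹ ↔ r ≤ 1 / n ^ w := by
  have hl : 0 < -Real.log r := neg_pos.2 (Real.log_neg hr0 hr1)
  rw [div_le_iff₀ hl, ← mul_le_mul_iff_right₀ hw, mul_inv_cancel_left₀ hw.ne', ← Real.log_rpow hn,
    ← Real.log_inv, Real.log_le_log_iff (by positivity) (by positivity), one_div,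
    le_inv_comm₀ hr0 (by positivity)]

theorem Real.inv_le_log_div_neg_log_iff (hn : 0 < n) (hr0 : 0 < r) (hr1 : r < 1) (hw : 0 < w) :
    w⁻¹ ≤ Real.log n / -Real.log r ↔ 1 / n ^ w ≤ r := by
  have hl : 0 < -Real.log r := neg_pos.2 (Real.log_neg hr0 hr1)
  rw [le_div_iff₀ hl, ← mul_le_mul_iff_right₀ hw, mul_inv_cancel_left₀ hw.ne', ← Real.log_rpow hn,
    ← Real.log_inv, Real.log_le_log_iff (by positivity) (by positivity), one_div,
    inv_le_comm₀ (by positivity) hr0]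

end logRatio

section exponent

variable {α w : ℝ}

theorem liminf_le_inv_of_approxPairs_infinite (hw : 0 < w) (h : (approxPairs α w).Infinite) :
    liminf (fun r => ENNReal.ofReal (Real.log (returnTime α r) / -Real.log r)) (𝓝[>] 0) ≤
      (ENNReal.ofReal w)⁻¹ := by
  have hscale : Tendsto (fun q : ℕ => 1 / (q : ℝ) ^ w) atTop (𝓝[>] 0) := by
    simpa only [one_div, Function.comp_def] using tendsto_inv_atTop_nhdsGT_zero.comp
      ((tendsto_rpow_atTop hw).comp tendsto_natCast_atTop_atTop)
  refine liminf_le_of_frequently_le' (hscale.frequently ?_)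
  refine (((approxPairs_infinite_iff hw.le).1 h).and_eventually (eventually_gt_atTop 1)).mono
    fun q ⟨hlt, hq⟩ => ?_
  have hqw : 1 < (q : ℝ) ^ w := Real.one_lt_rpow (by exact_mod_cast hq) hw
  set r := 1 / (q : ℝ) ^ w
  have hr0 : 0 < r := by positivity
  have hr1 : r < 1 := (div_lt_one (by positivity)).2 hqw
  have hR0 : (0 : ℝ) < returnTime α r := by exact_mod_cast (returnTime_mem hr0).1
  have hRq : (returnTime α r : ℝ) ≤ q := by exact_mod_cast returnTime_le (by omega) hlt
  rw [← ENNReal.ofReal_inv_of_pos hw]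
  refine ENNReal.ofReal_le_ofReal <| (Real.log_div_neg_log_le_inv_iff hR0 hr0 hr1 hw).2 ?_
  exact one_div_le_one_div_of_le (by positivity) (Real.rpow_le_rpow hR0.le hRq hw.le)

theorem Irrational.inv_le_liminf_of_approxPairs_finite (hα : Irrational α) (hw : 0 < w)
    (h : (approxPairs α w).Finite) :
    (ENNReal.ofReal w)⁻¹ ≤
      liminf (fun r => ENNReal.ofReal (Real.log (returnTime α r) / -Real.log r)) (𝓝[>] 0) := by
  have hfar : ∀ᶠ q : ℕ in atTop, 1 / (q : ℝ) ^ w ≤ nearestIntDist (q * α) := by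
    simpa only [not_frequently, not_lt] using
      mt (approxPairs_infinite_iff hw.le).2 (Set.not_infinite.2 h)
  refine le_liminf_of_le (by isBoundedDefault) ?_
  filter_upwards [hα.tendsto_returnTime.eventually hfar, Ioo_mem_nhdsGT one_pos]
    with r hfar ⟨hr0, hr1⟩
  obtain ⟨hR1, hlt⟩ := returnTime_mem (α := α) hr0
  rw [← ENNReal.ofReal_inv_of_pos hw]
  exact ENNReal.ofReal_le_ofReal <| (Real.inv_le_log_div_neg_log_iff (by exact_mod_cast hR1)
    hr0 hr1 hw).2 (hfar.trans hlt.le)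

end exponent

theorem ENNReal.eq_inv_sSup_ofReal_image {L : ℝ≥0∞} {S : Set ℝ} (h1 : 1 ∈ S)
    (hle : ∀ w ∈ S, L ≤ (ENNReal.ofReal w)⁻¹)
    (hge : ∀ w, 1 ≤ w → w ∉ S → (ENNReal.ofReal w)⁻¹ ≤ L) :
    L = (sSup (ENNReal.ofReal '' S))⁻¹ := by
  rw [eq_comm, inv_eq_iff_eq_inv]
  refine le_antisymm (sSup_le ?_) (le_of_forall_gt_imp_ge_of_dense fun b hSb => ?_)
  · rintro _ ⟨w, hw, rfl⟩
    exact ENNReal.le_inv_iff_le_inv.1 (hle w hw)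
  rcases eq_or_ne b ⊤ with rfl | hb_top
  · exact le_top
  have hb : ENNReal.ofReal b.toReal = b := ENNReal.ofReal_toReal hb_top
  have hS : b.toReal ∉ S := fun hbS =>
    (le_sSup (Set.mem_image_of_mem ENNReal.ofReal hbS)).not_gt (by rwa [hb])
  have hb1 : 1 ≤ b.toReal := by
    have := (le_sSup (Set.mem_image_of_mem ENNReal.ofReal h1)).trans hSb.le
    rwa [ENNReal.ofReal_one, ← hb, ENNReal.one_le_ofReal] at this
  exact hb ▸ ENNReal.inv_le_iff_inv_le.1 (hge _ hb1 hS)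

theorem stmt19_general (α : ℝ) (hirr : Irrational α) (p : ℝ) :
    Filter.liminf
        (fun r => ENNReal.ofReal (Real.log (rotRecTime α p r : ℝ) / (-Real.log r)))
        (nhdsWithin 0 (Set.Ioi 0)) =
      (diophTypeE α)⁻¹ := by
  simp only [rotRecTime_eq_returnTime]
  rw [diophTypeE_eq]
  refine ENNReal.eq_inv_sSup_ofReal_image ⟨le_rfl, hirr.approxPairs_one_infinite⟩ ?_ ?_
  · rintro w ⟨hw, hinf⟩
    exact liminf_le_inv_of_approxPairs_infinite (one_pos.trans_le hw) hinf
  · exact fun w hw hwS => hirr.inv_le_liminf_of_approxPairs_finite (one_pos.trans_le hw)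
      (Set.not_infinite.1 fun hinf => hwS ⟨hw, hinf⟩)

/-- For the irrational rotation `T_α` and every `p ∈ [0,1)`, the liminf recurrence exponent
equals `1/w(α)`. -/
theorem stmt19 (α : ℝ) (hirr : Irrational α) (p : ℝ) (hp : p ∈ Set.Ico (0 : ℝ) 1) :
    Filter.liminf
        (fun r => ENNReal.ofReal (Real.log (rotRecTime α p r : ℝ) / (-Real.log r)))
        (nhdsWithin 0 (Set.Ioi 0)) =
      (diophTypeE α)⁻¹ :=
  stmt19_general α hirr p
end
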